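/- arXiv:2409.17138 — 7 statements merged into one kernel-verified Lean document; each statement's English description precedes it below -/
import Mathlib

section
/- Let {X_t}_{t=1}^T and {Y_t}_{t=1}^T be nonnegative real sequences satisfying |X_t - Y_t| ≤ M_g · Σ_{k=t+1}^T X_k² for all t, with X_T = Y_T and X_t, Y_t ≤ G for all t, where M_g > 0 and G > 0. Then Σ_{t=1}^T X_t² ≤ max{e, 4e·M_g²·G²·T²} · Σ_{t=1}^T Y_t². -/
/-!
Write `R = ∑ Y_t²` and `S_t = ∑_{k ≥ t} X_k²`. If `4e·Mg²·T·R > 1`, the crude bound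
`∑ X_t² ≤ T·G²` already suffices. Otherwise `X_t ≤ Y_t + Mg·S_{t+1}` turns into the backward
recursion `S_t ≤ Y_t² + (1 + 2·Mg·Y_t + e·Mg²·R)·S_{t+1}`, valid as long as `S_{t+1} ≤ e·R`.
By Cauchy–Schwarz the product of these factors is at most `exp (2·Mg·√(T·R) + e·Mg²·T·R) ≤ e`,
so a discrete Grönwall argument keeps `S_t ≤ e·R` all the way down to `t = 1`.
-/

open Finset Real

/-- Backward discrete Grönwall. The recursion is only needed below `B`: the bound being proved
keeps `S` there. -/
theorem le_prod_mul_sum_of_backward_step {S y a : ℕ → ℝ} {n T : ℕ} {B : ℝ} (hn : n ≤ T + 1)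
    (ha : ∀ t ∈ Icc n T, 0 ≤ a t) (hy : ∀ t ∈ Icc n T, 0 ≤ y t)
    (hB : (∏ k ∈ Icc n T, (1 + a k)) * ∑ k ∈ Icc n T, y k ≤ B) (hlast : S (T + 1) ≤ 0)
    (hstep : ∀ t ∈ Icc n T, S (t + 1) ≤ B → S t ≤ y t + (1 + a t) * S (t + 1)) :
    S n ≤ (∏ k ∈ Icc n T, (1 + a k)) * ∑ k ∈ Icc n T, y k := by
  set P : ℕ → ℝ := fun t ↦ ∏ k ∈ Icc t T, (1 + a k) with hP
  set Q : ℕ → ℝ := fun t ↦ ∑ k ∈ Icc t T, y k with hQ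
  have hP_one : ∀ t, n ≤ t → 1 ≤ P t := fun t ht ↦
    one_le_prod fun k hk ↦ le_add_of_nonneg_right (ha k (Icc_subset_Icc_left ht hk))
  have hQ_nonneg : ∀ t, n ≤ t → 0 ≤ Q t := fun t ht ↦
    sum_nonneg fun k hk ↦ hy k (Icc_subset_Icc_left ht hk)
  have hPQ_le : ∀ t, n ≤ t → P t * Q t ≤ P n * Q n := fun t ht ↦ by
    have hP_le : P t ≤ P n := prod_le_prod_of_subset_of_one_le (Icc_subset_Icc_left ht)
      (fun k hk ↦ by linarith [ha k (Icc_subset_Icc_left ht hk)])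
      (fun k hk _ ↦ le_add_of_nonneg_right (ha k hk))
    have hQ_le : Q t ≤ Q n :=
      sum_le_sum_of_subset_of_nonneg (Icc_subset_Icc_left ht) fun k hk _ ↦ hy k hk
    exact mul_le_mul hP_le hQ_le (hQ_nonneg t ht) (zero_le_one.trans (hP_one n le_rfl))
  refine Nat.decreasingInduction' (P := fun t ↦ S t ≤ P t * Q t) (fun t htT hnt ih ↦ ?_) hn ?_
  · have htT' : t ≤ T := Nat.lt_succ_iff.1 htT
    have ht : t ∈ Icc n T := mem_Icc.2 ⟨hnt, htT'⟩
    have hPt : P t = (1 + a t) * P (t + 1) := by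
      simp only [hP]
      rw [Icc_add_one_left_eq_Ioc]
      exact (mul_prod_Ioc_eq_prod_Icc htT').symm
    have hQt : Q t = y t + Q (t + 1) := by
      simp only [hQ]
      rw [Icc_add_one_left_eq_Ioc]
      exact (add_sum_Ioc_eq_sum_Icc htT').symm
    have hat : 0 ≤ 1 + a t := by linarith [ha t ht]
    have hyt : y t ≤ P t * y t := le_mul_of_one_le_left (hy t ht) (hP_one t hnt)
    calc S t ≤ y t + (1 + a t) * S (t + 1) :=
          hstep t ht ((ih.trans (hPQ_le _ (by omega))).trans hB)
      _ ≤ y t + (1 + a t) * (P (t + 1) * Q (t + 1)) := by gcongr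
      _ ≤ P t * Q t := by rw [hQt, hPt]; linarith [hPt ▸ hyt]
  · simpa [hP, hQ] using hlast

theorem sq_add_le_of_le_add_mul {x y m s b : ℝ} (hx : 0 ≤ x) (hxy : x ≤ y + m * s)
    (hs : 0 ≤ s) (hsb : s ≤ b) : x ^ 2 + s ≤ y ^ 2 + (1 + (2 * m * y + m ^ 2 * b)) * s := by
  have hsq : x ^ 2 ≤ (y + m * s) ^ 2 := pow_le_pow_left₀ hx hxy 2
  have hss : m ^ 2 * (s * s) ≤ m ^ 2 * (b * s) :=
    mul_le_mul_of_nonneg_left (mul_le_mul_of_nonneg_right hsb hs) (sq_nonneg m)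
  nlinarith

theorem add_exp_one_mul_le_one {v u : ℝ} (hv : v ^ 2 ≤ 4 * u) (hu : 4 * exp 1 * u ≤ 1) :
    v + exp 1 * u ≤ 1 := by
  have he : 2 ≤ exp 1 := by linarith [add_one_le_exp (1 : ℝ)]
  have hu₀ : 0 ≤ u := by nlinarith [sq_nonneg v]
  nlinarith

theorem sum_sq_le_exp_one_mul_of_small {T : ℕ} {Mg : ℝ} {X Y : ℕ → ℝ} (hMg : 0 ≤ Mg)
    (hXnn : ∀ t ∈ Icc 1 T, 0 ≤ X t) (hYnn : ∀ t ∈ Icc 1 T, 0 ≤ Y t)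
    (hseq : ∀ t ∈ Icc 1 T, |X t - Y t| ≤ Mg * ∑ k ∈ Icc (t + 1) T, X k ^ 2)
    (hsmall : 4 * exp 1 * (Mg ^ 2 * T * ∑ t ∈ Icc 1 T, Y t ^ 2) ≤ 1) :
    ∑ t ∈ Icc 1 T, X t ^ 2 ≤ exp 1 * ∑ t ∈ Icc 1 T, Y t ^ 2 := by
  set R := ∑ t ∈ Icc 1 T, Y t ^ 2
  set a : ℕ → ℝ := fun k ↦ 2 * Mg * Y k + Mg ^ 2 * (exp 1 * R) with ha_def
  have ha : ∀ t ∈ Icc 1 T, 0 ≤ a t := fun t ht ↦ by have := hYnn t ht; positivity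
  have hsum_a : ∑ k ∈ Icc 1 T, a k ≤ 1 := by
    have hCS := sq_sum_le_card_mul_sum_sq (s := Icc 1 T) (f := Y)
    rw [Nat.card_Icc, add_tsub_cancel_right] at hCS
    have hv : (2 * Mg * ∑ k ∈ Icc 1 T, Y k) ^ 2 ≤ 4 * (Mg ^ 2 * T * R) := by
      rw [mul_pow, mul_pow]; nlinarith [sq_nonneg Mg]
    simp only [ha_def, sum_add_distrib, ← mul_sum, sum_const, Nat.card_Icc,
      add_tsub_cancel_right, nsmul_eq_mul]
    linarith [add_exp_one_mul_le_one hv hsmall]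
  have hprod : ∏ k ∈ Icc 1 T, (1 + a k) ≤ exp 1 :=
    calc ∏ k ∈ Icc 1 T, (1 + a k) ≤ ∏ k ∈ Icc 1 T, exp (a k) :=
          prod_le_prod (fun k hk ↦ by linarith [ha k hk])
            fun k _ ↦ by linarith [add_one_le_exp (a k)]
      _ = exp (∑ k ∈ Icc 1 T, a k) := (exp_sum _ _).symm
      _ ≤ exp 1 := exp_le_exp.2 hsum_a
  have hbound : (∏ k ∈ Icc 1 T, (1 + a k)) * R ≤ exp 1 * R :=
    mul_le_mul_of_nonneg_right hprod (sum_nonneg fun _ _ ↦ sq_nonneg _)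
  refine (le_prod_mul_sum_of_backward_step (S := fun t ↦ ∑ k ∈ Icc t T, X k ^ 2)
    (y := fun t ↦ Y t ^ 2) (n := 1) (by omega) ha (fun t _ ↦ sq_nonneg _) hbound (by simp)
    fun t ht hB ↦ ?_).trans hbound
  rw [← add_sum_Ioc_eq_sum_Icc (mem_Icc.1 ht).2, ← Icc_add_one_left_eq_Ioc]
  exact sq_add_le_of_le_add_mul (hXnn t ht) (by linarith [(abs_le.1 (hseq t ht)).2])
    (sum_nonneg fun _ _ ↦ sq_nonneg _) hB

theorem sequence_lemma_general (T : ℕ) (Mg G : ℝ) (hMg : 0 < Mg)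
    (X Y : ℕ → ℝ)
    (hXnn : ∀ t ∈ Finset.Icc 1 T, 0 ≤ X t) (hYnn : ∀ t ∈ Finset.Icc 1 T, 0 ≤ Y t)
    (hXG : ∀ t ∈ Finset.Icc 1 T, X t ≤ G)
    (hseq : ∀ t ∈ Finset.Icc 1 T,
      |X t - Y t| ≤ Mg * ∑ k ∈ Finset.Icc (t + 1) T, (X k) ^ 2) :
    ∑ t ∈ Finset.Icc 1 T, (X t) ^ 2 ≤
      max (Real.exp 1) (4 * Real.exp 1 * Mg ^ 2 * G ^ 2 * (T : ℝ) ^ 2) *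
        ∑ t ∈ Finset.Icc 1 T, (Y t) ^ 2 := by
  set R := ∑ t ∈ Icc 1 T, Y t ^ 2
  have hR : 0 ≤ R := sum_nonneg fun _ _ ↦ sq_nonneg _
  rcases le_or_gt (4 * exp 1 * (Mg ^ 2 * T * R)) 1 with hsmall | hlarge
  · calc ∑ t ∈ Icc 1 T, X t ^ 2 ≤ exp 1 * R :=
          sum_sq_le_exp_one_mul_of_small hMg.le hXnn hYnn hseq hsmall
      _ ≤ _ := by gcongr; exact le_max_left _ _
  · have hXsq : ∀ t ∈ Icc 1 T, X t ^ 2 ≤ G ^ 2 := fun t ht ↦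
      pow_le_pow_left₀ (hXnn t ht) (hXG t ht) 2
    calc ∑ t ∈ Icc 1 T, X t ^ 2 ≤ T * G ^ 2 := by
          simpa using sum_le_card_nsmul _ _ _ hXsq
      _ ≤ T * G ^ 2 * (4 * exp 1 * (Mg ^ 2 * T * R)) :=
          le_mul_of_one_le_right (by positivity) hlarge.le
      _ = 4 * exp 1 * Mg ^ 2 * G ^ 2 * T ^ 2 * R := by ring
      _ ≤ _ := by gcongr; exact le_max_right _ _

/-- **Sequence lemma.** If nonnegative sequences `X, Y` on `{1, …, T}` satisfy
`|X t - Y t| ≤ M_g * ∑_{k=t+1}^T X k ^ 2`, `X T = Y T`, and `X t, Y t ≤ G`, then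
`∑_{t=1}^T X t ^ 2 ≤ max {e, 4 e M_g² G² T²} * ∑_{t=1}^T Y t ^ 2`. -/
theorem sequence_lemma (T : ℕ) (hT : 1 ≤ T) (Mg G : ℝ) (hMg : 0 < Mg) (hG : 0 < G)
    (X Y : ℕ → ℝ)
    (hXnn : ∀ t ∈ Finset.Icc 1 T, 0 ≤ X t) (hYnn : ∀ t ∈ Finset.Icc 1 T, 0 ≤ Y t)
    (hXG : ∀ t ∈ Finset.Icc 1 T, X t ≤ G) (hYG : ∀ t ∈ Finset.Icc 1 T, Y t ≤ G)
    (hseq : ∀ t ∈ Finset.Icc 1 T,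
      |X t - Y t| ≤ Mg * ∑ k ∈ Finset.Icc (t + 1) T, (X k) ^ 2)
    (hTeq : X T = Y T) :
    ∑ t ∈ Finset.Icc 1 T, (X t) ^ 2 ≤
      max (Real.exp 1) (4 * Real.exp 1 * Mg ^ 2 * G ^ 2 * (T : ℝ) ^ 2) *
        ∑ t ∈ Finset.Icc 1 T, (Y t) ^ 2 :=
  sequence_lemma_general T Mg G hMg X Y hXnn hYnn hXG hseq
end

section
/- If f : X → ℝ is (α, μ)-gradient dominated over a convex compact set X (with α > 0, μ > 0), then f satisfies the KŁ condition on X with constant μ/α²: for all x ∈ X, f(x) - min_{y∈X} f(y) ≤ (α²/(2μ)) · min_{g ∈ N_X(x)} ‖∇f(x) + g‖². -/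
open Set

/-- The normal cone of a set `X` at a point `x`. -/
def normalCone {n : ℕ} (X : Set (EuclideanSpace ℝ (Fin n))) (x : EuclideanSpace ℝ (Fin n)) :
    Set (EuclideanSpace ℝ (Fin n)) :=
  {g | ∀ y ∈ X, (inner ℝ g (y - x) : ℝ) ≤ 0}

/-!
For every normal vector `g ∈ N_X(x)` and every `x' ∈ X` we have `⟪g, x - x'⟫ ≥ 0`, so
`α ⟪∇f x, x - x'⟫ ≤ α ‖∇f x + g‖ ‖x - x'‖` by Cauchy–Schwarz. Maximising the quadratic
`t ↦ a t - μ/2 t²` bounds the gradient-dominance term by `α²/(2μ) ‖∇f x + g‖²`; taking the infimum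
over `g` gives the KŁ inequality.
-/

theorem mul_sub_half_mul_sq_le_sq_div {μ : ℝ} (hμ : 0 < μ) (a t : ℝ) :
    a * t - μ / 2 * t ^ 2 ≤ a ^ 2 / (2 * μ) := by
  rw [le_div_iff₀ (by positivity)]
  nlinarith [sq_nonneg (μ * t - a)]

section NormalCone

variable {n : ℕ} {X : Set (EuclideanSpace ℝ (Fin n))} {x g : EuclideanSpace ℝ (Fin n)}

theorem zero_mem_normalCone : (0 : EuclideanSpace ℝ (Fin n)) ∈ normalCone X x := by
  intro y _
  simp

theorem inner_le_inner_add_of_mem_normalCone (hg : g ∈ normalCone X x)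
    (v : EuclideanSpace ℝ (Fin n)) {y : EuclideanSpace ℝ (Fin n)} (hy : y ∈ X) :
    (inner ℝ v (x - y) : ℝ) ≤ inner ℝ (v + g) (x - y) := by
  have hgy : (inner ℝ g (x - y) : ℝ) = -inner ℝ g (y - x) := by
    rw [← inner_neg_right, neg_sub]
  rw [inner_add_left, hgy]
  linarith [hg y hy]

theorem mul_inner_sub_half_mul_sq_le_of_mem_normalCone {α μ : ℝ} (hα : 0 ≤ α) (hμ : 0 < μ)
    (hg : g ∈ normalCone X x) (v : EuclideanSpace ℝ (Fin n)) {y : EuclideanSpace ℝ (Fin n)}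
    (hy : y ∈ X) :
    α * (inner ℝ v (x - y) : ℝ) - μ / 2 * ‖x - y‖ ^ 2 ≤ α ^ 2 / (2 * μ) * ‖v + g‖ ^ 2 := by
  have hinner : α * (inner ℝ v (x - y) : ℝ) ≤ α * ‖v + g‖ * ‖x - y‖ := by
    rw [mul_assoc]
    exact mul_le_mul_of_nonneg_left
      ((inner_le_inner_add_of_mem_normalCone hg v hy).trans (real_inner_le_norm _ _)) hα
  calc α * (inner ℝ v (x - y) : ℝ) - μ / 2 * ‖x - y‖ ^ 2
      ≤ α * ‖v + g‖ * ‖x - y‖ - μ / 2 * ‖x - y‖ ^ 2 := by linarith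
    _ ≤ (α * ‖v + g‖) ^ 2 / (2 * μ) := mul_sub_half_mul_sq_le_sq_div hμ _ _
    _ = α ^ 2 / (2 * μ) * ‖v + g‖ ^ 2 := by ring

theorem sSup_mul_inner_sub_half_mul_sq_le_of_mem_normalCone {α μ : ℝ} (hα : 0 ≤ α)
    (hμ : 0 < μ) (hx : x ∈ X) (hg : g ∈ normalCone X x) (v : EuclideanSpace ℝ (Fin n)) :
    sSup ((fun y => α * (inner ℝ v (x - y) : ℝ) - μ / 2 * ‖x - y‖ ^ 2) '' X) ≤
      α ^ 2 / (2 * μ) * ‖v + g‖ ^ 2 := by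
  refine csSup_le ⟨_, mem_image_of_mem _ hx⟩ ?_
  rintro _ ⟨y, hy, rfl⟩
  exact mul_inner_sub_half_mul_sq_le_of_mem_normalCone hα hμ hg v hy

end NormalCone

theorem gradientDominance_implies_KL_general {n : ℕ} (X : Set (EuclideanSpace ℝ (Fin n)))
    (f : EuclideanSpace ℝ (Fin n) → ℝ) (f' : EuclideanSpace ℝ (Fin n) → EuclideanSpace ℝ (Fin n))
    (α μ : ℝ) (hα : 0 < α) (hμ : 0 < μ)
    (hgd : ∀ x ∈ X, f x - sInf (f '' X) ≤
      sSup ((fun x' => α * (inner ℝ (f' x) (x - x') : ℝ) - μ / 2 * ‖x - x'‖ ^ 2) '' X)) :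
    ∀ x ∈ X, f x - sInf (f '' X) ≤
      α ^ 2 / (2 * μ) * sInf ((fun g => ‖f' x + g‖ ^ 2) '' normalCone X x) := by
  intro x hx
  have hc : 0 < α ^ 2 / (2 * μ) := by positivity
  rw [← div_le_iff₀' hc]
  refine le_csInf ⟨_, mem_image_of_mem _ zero_mem_normalCone⟩ ?_
  rintro _ ⟨g, hg, rfl⟩
  rw [div_le_iff₀' hc]
  exact (hgd x hx).trans
    (sSup_mul_inner_sub_half_mul_sq_le_of_mem_normalCone hα.le hμ hx hg (f' x))

/-- **Gradient dominance implies the KŁ condition.** If `f` is `(α, μ)`-gradient dominated over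
a convex compact set `X`, i.e. `f x - f* ≤ max_{x' ∈ X} (α ⟪∇f x, x - x'⟫ - μ/2 ‖x - x'‖²)`,
then `f` satisfies the KŁ condition on `X` with constant `μ / α²`. -/
theorem gradientDominance_implies_KL {n : ℕ} (X : Set (EuclideanSpace ℝ (Fin n)))
    (hXconv : Convex ℝ X) (hXcomp : IsCompact X) (hXne : X.Nonempty)
    (f : EuclideanSpace ℝ (Fin n) → ℝ) (f' : EuclideanSpace ℝ (Fin n) → EuclideanSpace ℝ (Fin n))
    (α μ : ℝ) (hα : 0 < α) (hμ : 0 < μ)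
    (hdiff : ∀ x ∈ X, HasGradientAt f (f' x) x)
    (hgd : ∀ x ∈ X, f x - sInf (f '' X) ≤
      sSup ((fun x' => α * (inner ℝ (f' x) (x - x') : ℝ) - μ / 2 * ‖x - x'‖ ^ 2) '' X)) :
    ∀ x ∈ X, f x - sInf (f '' X) ≤
      α ^ 2 / (2 * μ) * sInf ((fun g => ‖f' x + g‖ ^ 2) '' normalCone X x) :=
  gradientDominance_implies_KL_general X f f' α μ hα hμ hgd
end

section
/- Let X ⊆ ℝⁿ be convex and compact, f : ℝⁿ → ℝ be L-smooth and satisfy the KŁ condition on X with constant μ > 0. The projected gradient descent iterates x_{k+1} = Proj_X(x_k - (1/L)∇f(x_k)) satisfy f(x_k) - f* ≤ (1 - μ/(4L + μ))^k · (f(x_0) - f*), where f* = min_{x∈X} f(x). -/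
/-!
Put `q = Proj_X (p - (1/L) ∇f p)`. The variational inequality of the projection says that
`L (p - q) - ∇f p` lies in the normal cone of `X` at `q`. Tested against `p ∈ X` and combined with
the descent lemma, it gives the sufficient decrease `f q ≤ f p - (L/2) ‖p - q‖²`. By the Lipschitz
bound, `∇f q + (L (p - q) - ∇f p)` has norm at most `2L ‖p - q‖`, so the KŁ inequality at `q` gives
`f q - f* ≤ (2L²/μ) ‖p - q‖² ≤ (4L/μ) (f p - f q)`, that is `f q - f* ≤ 4L/(4L + μ) · (f p - f*)`.
-/

open Set

open scoped RealInnerProductSpace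

section LipschitzGradient

variable {E : Type*} [NormedAddCommGroup E] [InnerProductSpace ℝ E]
  {f : E → ℝ} {f' : E → E} {L : ℝ}

theorem HasGradientAt.hasDerivAt_comp_add_smul [CompleteSpace E] {g a d : E} {t : ℝ}
    (hf : HasGradientAt f g (a + t • d)) :
    HasDerivAt (fun s : ℝ => f (a + s • d)) ⟪g, d⟫ t := by
  have hline : HasDerivAt (fun s : ℝ => a + s • d) d t := by
    simpa using ((hasDerivAt_id t).smul_const d).const_add a
  have h := hf.hasFDerivAt.comp_hasDerivAt t hline
  simp only [InnerProductSpace.toDual_apply_apply] at h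
  exact h

theorem inner_sub_gradient_le (hlip : ∀ x y, ‖f' x - f' y‖ ≤ L * ‖x - y‖) (a d : E) {t : ℝ}
    (ht : 0 ≤ t) : ⟪f' (a + t • d) - f' a, d⟫ ≤ L * t * ‖d‖ ^ 2 :=
  calc ⟪f' (a + t • d) - f' a, d⟫ ≤ ‖f' (a + t • d) - f' a‖ * ‖d‖ := real_inner_le_norm _ _
    _ ≤ L * ‖(a + t • d) - a‖ * ‖d‖ := by gcongr; exact hlip _ _
    _ = L * t * ‖d‖ ^ 2 := by
      rw [add_sub_cancel_left, norm_smul, Real.norm_of_nonneg ht]; ring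

/-- The descent lemma. -/
theorem le_add_inner_add_sq_of_lipschitz_gradient [CompleteSpace E]
    (hf : ∀ x, HasGradientAt f (f' x) x) (hlip : ∀ x y, ‖f' x - f' y‖ ≤ L * ‖x - y‖) (a b : E) :
    f b ≤ f a + ⟪f' a, b - a⟫ + L / 2 * ‖b - a‖ ^ 2 := by
  set d := b - a
  set φ : ℝ → ℝ := fun t => f (a + t • d) - t * ⟪f' a, d⟫ - L / 2 * t ^ 2 * ‖d‖ ^ 2
  have hφ (t : ℝ) : HasDerivAt φ (⟪f' (a + t • d) - f' a, d⟫ - L * t * ‖d‖ ^ 2) t := by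
    have h : HasDerivAt φ
        (⟪f' (a + t • d), d⟫ - 1 * ⟪f' a, d⟫ - L / 2 * (2 * t ^ 1) * ‖d‖ ^ 2) t :=
      (((hf (a + t • d)).hasDerivAt_comp_add_smul).sub
        ((hasDerivAt_id t).mul_const ⟪f' a, d⟫)).sub
        (((hasDerivAt_pow 2 t).const_mul (L / 2)).mul_const (‖d‖ ^ 2))
    refine h.congr_deriv ?_
    rw [inner_sub_left]
    ring
  have hanti : AntitoneOn φ (Icc 0 1) :=
    antitoneOn_of_hasDerivWithinAt_nonpos (convex_Icc 0 1)
      (fun t _ => (hφ t).continuousAt.continuousWithinAt) (fun t _ => (hφ t).hasDerivWithinAt)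
      fun t ht => by
        rw [interior_Icc] at ht
        linarith [inner_sub_gradient_le hlip a d ht.1.le]
  have h01 := hanti (left_mem_Icc.2 zero_le_one) (right_mem_Icc.2 zero_le_one) zero_le_one
  simp only [φ, d, zero_smul, add_zero, one_smul, add_sub_cancel] at h01
  linarith

end LipschitzGradient

section ProjectedGradientStep

variable {E : Type*} [NormedAddCommGroup E] [InnerProductSpace ℝ E]
  {f : E → ℝ} {f' : E → E} {L : ℝ} {X : Set E} {p q : E}

theorem real_inner_sub_nonpos_of_forall_norm_sub_le (hX : Convex ℝ X) {u v : E} (hv : v ∈ X)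
    (hmin : ∀ w ∈ X, ‖u - v‖ ≤ ‖u - w‖) : ∀ w ∈ X, ⟪u - v, w - v⟫ ≤ 0 := by
  have : Nonempty X := ⟨⟨v, hv⟩⟩
  refine (norm_eq_iInf_iff_real_inner_le_zero hX hv).1 (le_antisymm ?_ ?_)
  · exact le_ciInf fun w => hmin w w.2
  · exact ciInf_le (f := fun w : X => ‖u - w‖) ⟨0, by rintro _ ⟨w, rfl⟩; exact norm_nonneg _⟩
      ⟨v, hv⟩

/-- `L • (p - q) - g` lies in the normal cone of `X` at the projected gradient step
`q = Proj_X (p - (1 / L) • g)`. -/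
theorem real_inner_projected_step_nonpos (hX : Convex ℝ X) (hL : 0 < L) {g : E} (hq : q ∈ X)
    (hmin : ∀ z ∈ X, ‖p - (1 / L) • g - q‖ ≤ ‖p - (1 / L) • g - z‖) :
    ∀ z ∈ X, ⟪L • (p - q) - g, z - q⟫ ≤ 0 := by
  intro z hz
  have hscale : L • (p - q) - g = L • (p - (1 / L) • g - q) := by
    simp only [smul_sub, smul_smul, mul_one_div_cancel hL.ne', one_smul]
    abel
  rw [hscale, real_inner_smul_left]
  exact mul_nonpos_of_nonneg_of_nonpos hL.le
    (real_inner_sub_nonpos_of_forall_norm_sub_le hX hq hmin z hz)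

theorem le_sub_sq_of_projected_step [CompleteSpace E] (hf : ∀ x, HasGradientAt f (f' x) x)
    (hlip : ∀ x y, ‖f' x - f' y‖ ≤ L * ‖x - y‖) (hp : p ∈ X)
    (hnormal : ∀ z ∈ X, ⟪L • (p - q) - f' p, z - q⟫ ≤ 0) :
    f q ≤ f p - L / 2 * ‖p - q‖ ^ 2 := by
  have hdescent := le_add_inner_add_sq_of_lipschitz_gradient hf hlip p q
  have hinner := hnormal p hp
  rw [inner_sub_left, real_inner_smul_left, real_inner_self_eq_norm_sq] at hinner
  rw [norm_sub_rev, ← neg_sub p q, inner_neg_right] at hdescent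
  linarith

theorem norm_add_projected_step_residual_le (hL : 0 ≤ L)
    (hlip : ∀ x y, ‖f' x - f' y‖ ≤ L * ‖x - y‖) (p q : E) :
    ‖f' q + (L • (p - q) - f' p)‖ ≤ 2 * L * ‖p - q‖ :=
  calc ‖f' q + (L • (p - q) - f' p)‖ = ‖(f' q - f' p) + L • (p - q)‖ := by congr 1; abel
    _ ≤ ‖f' q - f' p‖ + ‖L • (p - q)‖ := norm_add_le _ _
    _ ≤ L * ‖q - p‖ + L * ‖p - q‖ := by
      rw [norm_smul, Real.norm_of_nonneg hL]; gcongr; exact hlip q p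
    _ = 2 * L * ‖p - q‖ := by rw [norm_sub_rev]; ring

end ProjectedGradientStep

theorem sInf_image_norm_add_sq_le {E : Type*} [SeminormedAddCommGroup E] {C : Set E} {v g : E}
    (hg : g ∈ C) : sInf ((fun g => ‖v + g‖ ^ 2) '' C) ≤ ‖v + g‖ ^ 2 :=
  csInf_le ⟨0, by rintro _ ⟨_, _, rfl⟩; positivity⟩ ⟨g, hg, rfl⟩

theorem le_one_sub_div_mul_of_kl_of_descent {L μ r a b : ℝ} (hL : 0 < L) (hμ : 0 < μ)
    (hkl : a ≤ 1 / (2 * μ) * (2 * L * r) ^ 2) (hdescent : a ≤ b - L / 2 * r ^ 2) :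
    a ≤ (1 - μ / (4 * L + μ)) * b := by
  have hklμ : μ * a ≤ 2 * L ^ 2 * r ^ 2 := by
    rw [div_mul_eq_mul_div, one_mul, le_div_iff₀ (by positivity)] at hkl
    linarith
  have hrate : 1 - μ / (4 * L + μ) = 4 * L / (4 * L + μ) := by field_simp; ring
  rw [hrate, div_mul_eq_mul_div, le_div_iff₀ (by positivity)]
  nlinarith

theorem projected_gradient_step_contraction {n : ℕ} {X : Set (EuclideanSpace ℝ (Fin n))}
    {f : EuclideanSpace ℝ (Fin n) → ℝ} {f' : EuclideanSpace ℝ (Fin n) → EuclideanSpace ℝ (Fin n)}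
    {L μ S : ℝ} (hL : 0 < L) (hμ : 0 < μ) (hdiff : ∀ x, HasGradientAt f (f' x) x)
    (hlip : ∀ x y, ‖f' x - f' y‖ ≤ L * ‖x - y‖) {p q : EuclideanSpace ℝ (Fin n)}
    (hKL : f q - S ≤ 1 / (2 * μ) * sInf ((fun g => ‖f' q + g‖ ^ 2) '' normalCone X q))
    (hp : p ∈ X) (hnormal : L • (p - q) - f' p ∈ normalCone X q) :
    f q - S ≤ (1 - μ / (4 * L + μ)) * (f p - S) := by
  refine le_one_sub_div_mul_of_kl_of_descent (r := ‖p - q‖) hL hμ (hKL.trans ?_) ?_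
  · gcongr
    exact (sInf_image_norm_add_sq_le hnormal).trans <| pow_le_pow_left₀ (norm_nonneg _)
      (norm_add_projected_step_residual_le hL.le hlip p q) 2
  · linarith [le_sub_sq_of_projected_step hdiff hlip hp hnormal]

theorem projected_gradient_descent_KL_linear_rate_general {n : ℕ}
    (X : Set (EuclideanSpace ℝ (Fin n)))
    (hXconv : Convex ℝ X)
    (f : EuclideanSpace ℝ (Fin n) → ℝ) (f' : EuclideanSpace ℝ (Fin n) → EuclideanSpace ℝ (Fin n))
    (L μ : ℝ) (hL : 0 < L) (hμ : 0 < μ)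
    (hdiff : ∀ x, HasGradientAt f (f' x) x)
    (hlip : ∀ x y, ‖f' x - f' y‖ ≤ L * ‖x - y‖)
    (hKL : ∀ x ∈ X, f x - sInf (f '' X) ≤
      1 / (2 * μ) * sInf ((fun g => ‖f' x + g‖ ^ 2) '' normalCone X x))
    (proj : EuclideanSpace ℝ (Fin n) → EuclideanSpace ℝ (Fin n))
    (hproj : ∀ y, proj y ∈ X ∧ ∀ z ∈ X, ‖y - proj y‖ ≤ ‖y - z‖)
    (x : ℕ → EuclideanSpace ℝ (Fin n)) (hx0 : x 0 ∈ X)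
    (hstep : ∀ k, x (k + 1) = proj (x k - (1 / L) • f' (x k))) :
    ∀ k, f (x k) - sInf (f '' X) ≤
      (1 - μ / (4 * L + μ)) ^ k * (f (x 0) - sInf (f '' X)) := by
  have hmem : ∀ k, x k ∈ X := Nat.rec hx0 fun k _ => hstep k ▸ (hproj _).1
  have hrate : 0 ≤ 1 - μ / (4 * L + μ) :=
    sub_nonneg.2 <| (div_le_one (by positivity)).2 (by linarith)
  intro k
  refine le_geom (u := fun k => f (x k) - sInf (f '' X)) hrate k fun j _ => ?_
  have hnormal : L • (x j - x (j + 1)) - f' (x j) ∈ normalCone X (x (j + 1)) := by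
    refine real_inner_projected_step_nonpos hXconv hL (hmem (j + 1)) ?_
    rw [hstep j]
    exact (hproj _).2
  exact projected_gradient_step_contraction hL hμ hdiff hlip (hKL _ (hmem (j + 1))) (hmem j)
    hnormal

/-- **Linear convergence of projected gradient descent under the KŁ condition.**
If `f` is `L`-smooth and satisfies the KŁ condition on the convex compact set `X` with
constant `μ > 0`, the projected gradient descent iterates
`x_{k+1} = Proj_X (x_k - (1/L) ∇f(x_k))` satisfy
`f x_k - f* ≤ (1 - μ/(4L + μ))^k (f x_0 - f*)`. -/
theorem projected_gradient_descent_KL_linear_rate {n : ℕ}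
    (X : Set (EuclideanSpace ℝ (Fin n)))
    (hXconv : Convex ℝ X) (hXcomp : IsCompact X) (hXne : X.Nonempty)
    (f : EuclideanSpace ℝ (Fin n) → ℝ) (f' : EuclideanSpace ℝ (Fin n) → EuclideanSpace ℝ (Fin n))
    (L μ : ℝ) (hL : 0 < L) (hμ : 0 < μ)
    (hdiff : ∀ x, HasGradientAt f (f' x) x)
    (hlip : ∀ x y, ‖f' x - f' y‖ ≤ L * ‖x - y‖)
    (hKL : ∀ x ∈ X, f x - sInf (f '' X) ≤
      1 / (2 * μ) * sInf ((fun g => ‖f' x + g‖ ^ 2) '' normalCone X x))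
    (proj : EuclideanSpace ℝ (Fin n) → EuclideanSpace ℝ (Fin n))
    (hproj : ∀ y, proj y ∈ X ∧ ∀ z ∈ X, ‖y - proj y‖ ≤ ‖y - z‖)
    (x : ℕ → EuclideanSpace ℝ (Fin n)) (hx0 : x 0 ∈ X)
    (hstep : ∀ k, x (k + 1) = proj (x k - (1 / L) • f' (x k))) :
    ∀ k, f (x k) - sInf (f '' X) ≤
      (1 - μ / (4 * L + μ)) ^ k * (f (x 0) - sInf (f '' X)) :=
  projected_gradient_descent_KL_linear_rate_general X hXconv f f' L μ hL hμ hdiff hlip hKL proj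
    hproj x hx0 hstep
end

section
/- Let f : ℝⁿ → ℝ be L-smooth, X convex and closed, and x_{k+1} = Proj_X(x_k - (1/L)g) for some vector g. Then min_{h ∈ N_X(x_{k+1})} ‖∇f(x_{k+1}) + h‖ ≤ 2L‖x_{k+1} - x_k‖ + ‖∇f(x_k) - g‖. -/
/-
The optimality condition of the projection puts `h := L • (xk - (1/L) • g - xk1)` in the normal
cone at `xk1`, and `∇f(xk1) + h = (∇f(xk1) - ∇f(xk)) + (∇f(xk) - g) + L • (xk - xk1)`.
The triangle inequality and the Lipschitz bound on the first summand give the estimate.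
-/

open Set

section NormalCone

variable {n : ℕ} {X : Set (EuclideanSpace ℝ (Fin n))} {p : EuclideanSpace ℝ (Fin n)}

theorem smul_mem_normalCone {v : EuclideanSpace ℝ (Fin n)} (hv : v ∈ normalCone X p) {c : ℝ}
    (hc : 0 ≤ c) : c • v ∈ normalCone X p := fun y hy => by
  rw [real_inner_smul_left]
  exact mul_nonpos_of_nonneg_of_nonpos hc (hv y hy)

theorem sub_mem_normalCone_of_forall_norm_sub_le (hX : Convex ℝ X) (hp : p ∈ X)
    {u : EuclideanSpace ℝ (Fin n)} (hmin : ∀ z ∈ X, ‖u - p‖ ≤ ‖u - z‖) :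
    u - p ∈ normalCone X p := by
  have : Nonempty X := ⟨⟨p, hp⟩⟩
  refine (norm_eq_iInf_iff_real_inner_le_zero hX hp).mp (le_antisymm ?_ ?_)
  · exact le_ciInf fun z => hmin z z.2
  · exact ciInf_le ⟨0, by rintro r ⟨z, rfl⟩; positivity⟩ (⟨p, hp⟩ : X)

theorem sInf_norm_add_le {v h : EuclideanSpace ℝ (Fin n)} (hh : h ∈ normalCone X p) :
    sInf ((fun h => ‖v + h‖) '' normalCone X p) ≤ ‖v + h‖ :=
  csInf_le ⟨0, by rintro r ⟨w, -, rfl⟩; positivity⟩ (mem_image_of_mem _ hh)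

end NormalCone

theorem projected_step_stationarity_general {n : ℕ} (X : Set (EuclideanSpace ℝ (Fin n)))
    (hXconv : Convex ℝ X)
    (f' : EuclideanSpace ℝ (Fin n) → EuclideanSpace ℝ (Fin n))
    (L : ℝ) (hL : 0 < L)
    (hlip : ∀ x y, ‖f' x - f' y‖ ≤ L * ‖x - y‖)
    (g xk xk1 : EuclideanSpace ℝ (Fin n))
    -- `xk1` is the Euclidean projection of `xk - (1 / L) g` onto `X`
    (hxk1 : xk1 ∈ X)
    (hproj : ∀ z ∈ X, ‖(xk - (1 / L) • g) - xk1‖ ≤ ‖(xk - (1 / L) • g) - z‖) :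
    sInf ((fun h => ‖f' xk1 + h‖) '' normalCone X xk1) ≤
      2 * L * ‖xk1 - xk‖ + ‖f' xk - g‖ := by
  set h := L • ((xk - (1 / L) • g) - xk1)
  have hmem : h ∈ normalCone X xk1 :=
    smul_mem_normalCone (sub_mem_normalCone_of_forall_norm_sub_le hXconv hxk1 hproj) hL.le
  have hsplit : f' xk1 + h = (f' xk1 - f' xk) + (f' xk - g) + L • (xk - xk1) := by
    simp only [h, smul_sub, smul_smul, mul_one_div_cancel hL.ne', one_smul]
    abel
  have hstep : ‖L • (xk - xk1)‖ = L * ‖xk1 - xk‖ := by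
    rw [norm_smul, Real.norm_of_nonneg hL.le, norm_sub_rev]
  calc sInf ((fun h => ‖f' xk1 + h‖) '' normalCone X xk1)
      ≤ ‖f' xk1 + h‖ := sInf_norm_add_le hmem
    _ ≤ ‖f' xk1 - f' xk‖ + ‖f' xk - g‖ + ‖L • (xk - xk1)‖ := by
        rw [hsplit]; exact norm_add₃_le
    _ ≤ 2 * L * ‖xk1 - xk‖ + ‖f' xk - g‖ := by linarith [hlip xk1 xk]

/-- **Stationarity-measure bound for a projected gradient step.** If `f` is `L`-smooth, `X` is
convex and closed, and `x_{k+1} = Proj_X (x_k - (1/L) g)`, then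
`min_{h ∈ N_X(x_{k+1})} ‖∇f(x_{k+1}) + h‖ ≤ 2L ‖x_{k+1} - x_k‖ + ‖∇f(x_k) - g‖`. -/
theorem projected_step_stationarity {n : ℕ} (X : Set (EuclideanSpace ℝ (Fin n)))
    (hXconv : Convex ℝ X) (hXclosed : IsClosed X)
    (f : EuclideanSpace ℝ (Fin n) → ℝ) (f' : EuclideanSpace ℝ (Fin n) → EuclideanSpace ℝ (Fin n))
    (L : ℝ) (hL : 0 < L)
    (hdiff : ∀ x, HasGradientAt f (f' x) x)
    (hlip : ∀ x y, ‖f' x - f' y‖ ≤ L * ‖x - y‖)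
    (g xk xk1 : EuclideanSpace ℝ (Fin n))
    -- `xk1` is the Euclidean projection of `xk - (1/L) g` onto `X`
    (hxk1 : xk1 ∈ X)
    (hproj : ∀ z ∈ X, ‖(xk - (1 / L) • g) - xk1‖ ≤ ‖(xk - (1 / L) • g) - z‖) :
    sInf ((fun h => ‖f' xk1 + h‖) '' normalCone X xk1) ≤
      2 * L * ‖xk1 - xk‖ + ‖f' xk - g‖ :=
  projected_step_stationarity_general X hXconv f' L hL hlip g xk xk1 hxk1 hproj
end

section
/- Let f : ℝ → ℝ be convex with a minimizer at θ*, and let ξ be a real random variable with cumulative distribution function P. Then for any θ, E[f(ξ ∨ θ) - f(ξ ∨ θ*)] ≤ f(θ) - f(θ*), where ∨ denotes the maximum. -/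
/-! A convex function is antitone left of its minimizer `θ*` and monotone right of it, so for every
`x` the gap `f (x ⊔ θ) - f (x ⊔ θ*)` lies in `[0, f θ - f θ*]`. Integrating this bounded,
nonnegative function against a probability measure gives at most `f θ - f θ*`. -/

open MeasureTheory Set

section ConvexMinimizer

variable {𝕜 β : Type*} [Field 𝕜] [LinearOrder 𝕜] [IsStrictOrderedRing 𝕜]
  [AddCommMonoid β] [LinearOrder β] [IsOrderedAddMonoid β] [Module 𝕜 β] [PosSMulStrictMono 𝕜 β]
  {f : 𝕜 → β} {x₀ : 𝕜}

theorem ConvexOn.antitoneOn_Iic_of_forall_le (hf : ConvexOn 𝕜 univ f) (hmin : ∀ y, f x₀ ≤ f y) :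
    AntitoneOn f (Iic x₀) := by
  intro a _ b hb hab
  have hseg : b ∈ segment 𝕜 a x₀ := by rw [segment_eq_Icc (hab.trans hb)]; exact ⟨hab, hb⟩
  simpa [max_eq_left (hmin a)] using hf.le_on_segment (mem_univ a) (mem_univ x₀) hseg

theorem ConvexOn.monotoneOn_Ici_of_forall_le (hf : ConvexOn 𝕜 univ f) (hmin : ∀ y, f x₀ ≤ f y) :
    MonotoneOn f (Ici x₀) := by
  intro a ha b _ hab
  have hseg : a ∈ segment 𝕜 x₀ b := by rw [segment_eq_Icc (ha.trans hab)]; exact ⟨ha, hab⟩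
  simpa [max_eq_right (hmin b)] using hf.le_on_segment (mem_univ x₀) (mem_univ b) hseg

end ConvexMinimizer

theorem apply_max_sub_apply_max_mem_Icc {α β : Type*} [LinearOrder α] [AddCommGroup β]
    [LinearOrder β] [IsOrderedAddMonoid β] {f : α → β} {x₀ : α}
    (hanti : AntitoneOn f (Iic x₀)) (hmono : MonotoneOn f (Ici x₀)) (x θ : α) :
    f (max x θ) - f (max x x₀) ∈ Icc 0 (f θ - f x₀) := by
  have hmin : ∀ y, f x₀ ≤ f y := fun y ↦ (le_total y x₀).elim
    (fun hy ↦ hanti hy le_rfl hy) (fun hy ↦ hmono le_rfl hy hy)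
  rcases le_total x x₀ with hx | hx <;> rcases le_total x θ with hxθ | hxθ <;>
    simp only [max_eq_left, max_eq_right, hx, hxθ]
  · exact ⟨sub_nonneg.2 (hmin θ), le_rfl⟩
  · exact ⟨sub_nonneg.2 (hmin x), sub_le_sub_right (hanti (hxθ.trans hx) hx hxθ) _⟩
  · exact ⟨sub_nonneg.2 (hmono hx (hx.trans hxθ) hxθ), sub_le_sub_left (hmin x) _⟩
  · exact ⟨(sub_self _).ge, (sub_self _).trans_le (sub_nonneg.2 (hmin θ))⟩

theorem expected_max_gap_upper_bound_general (f : ℝ → ℝ) (hf : ConvexOn ℝ Set.univ f)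
    (θstar : ℝ) (hmin : ∀ y : ℝ, f θstar ≤ f y)
    (P : Measure ℝ) [IsProbabilityMeasure P] (θ : ℝ) :
    (∫ x, (f (max x θ) - f (max x θstar)) ∂P) ≤ f θ - f θstar := by
  have hgap := apply_max_sub_apply_max_mem_Icc (hf.antitoneOn_Iic_of_forall_le hmin)
    (hf.monotoneOn_Ici_of_forall_le hmin) (θ := θ)
  calc (∫ x, (f (max x θ) - f (max x θstar)) ∂P)
      ≤ ∫ _, (f θ - f θstar) ∂P :=
        integral_mono_of_nonneg (.of_forall fun x ↦ (hgap x).1) (integrable_const _)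
          (.of_forall fun x ↦ (hgap x).2)
    _ = f θ - f θstar := by simp

/-- **Suboptimality gap after a max-transform.** If `f` is convex with global minimizer `θ*`
and `ξ` is a real random variable with distribution `P`, then for any `θ`,
`E[f(ξ ∨ θ) - f(ξ ∨ θ*)] ≤ f θ - f θ*`. -/
theorem expected_max_gap_upper_bound (f : ℝ → ℝ) (hf : ConvexOn ℝ Set.univ f)
    (θstar : ℝ) (hmin : ∀ y : ℝ, f θstar ≤ f y)
    (P : Measure ℝ) [IsProbabilityMeasure P] (θ : ℝ)
    (hint₁ : Integrable (fun x => f (max x θ)) P)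
    (hint₂ : Integrable (fun x => f (max x θstar)) P) :
    (∫ x, (f (max x θ) - f (max x θstar)) ∂P) ≤ f θ - f θstar :=
  expected_max_gap_upper_bound_general f hf θstar hmin P θ
end

section
/- Let f : ℝ → ℝ be convex with minimizer θ*, let ξ be a real random variable with CDF P, and suppose θ ≤ θ*. Then E[f(ξ ∨ θ) - f(ξ ∨ θ*)] ≥ P(ξ ≤ θ) · (f(θ) - f(θ*)). Consequently, if P(ξ ≤ θ) ≥ α > 0 then f(θ) - f(θ*) ≤ (1/α) · E[f(ξ ∨ θ) - f(ξ ∨ θ*)]. -/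
open MeasureTheory

/-!
Pointwise, the gap `f (x ∨ θ) - f (x ∨ θ*)` equals `f θ - f θ*` when `x ≤ θ`, and is
nonnegative otherwise (it is `f x - f θ* ≥ 0` for `θ < x ≤ θ*` and vanishes for `x ≥ θ*`).
So it dominates `(f θ - f θ*) • 𝟙{x ≤ θ}`; integrate.
-/

theorem measureReal_mul_le_integral_of_indicator_le {α : Type*} [MeasurableSpace α]
    {μ : Measure α} {s : Set α} (hs : MeasurableSet s) {c : ℝ} (hc : 0 ≤ c) {g : α → ℝ}
    (hg : Integrable g μ) (hle : ∀ x, s.indicator (fun _ => c) x ≤ g x) :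
    μ.real s * c ≤ ∫ x, g x ∂μ := by
  rw [← smul_eq_mul, ← integral_indicator_const c hs]
  exact integral_mono_of_nonneg (.of_forall (Set.indicator_nonneg fun _ _ => hc)) hg
    (.of_forall hle)

theorem indicator_Iic_le_max_gap {f : ℝ → ℝ} {θ θstar : ℝ} (hmin : ∀ y, f θstar ≤ f y)
    (hθ : θ ≤ θstar) (x : ℝ) :
    (Set.Iic θ).indicator (fun _ => f θ - f θstar) x ≤ f (max x θ) - f (max x θstar) := by
  by_cases hxθ : x ≤ θ
  · rw [Set.indicator_of_mem (Set.mem_Iic.2 hxθ), max_eq_right hxθ,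
      max_eq_right (hxθ.trans hθ)]
  have hθx : θ < x := not_le.1 hxθ
  rw [Set.indicator_of_notMem (Set.notMem_Iic.2 hθx), max_eq_left hθx.le, sub_nonneg]
  rcases le_total x θstar with hx | hx
  · rw [max_eq_right hx]
    exact hmin x
  · rw [max_eq_left hx]

theorem expected_max_gap_lower_bound_general (f : ℝ → ℝ)
    (θstar : ℝ) (hmin : ∀ y : ℝ, f θstar ≤ f y)
    (P : Measure ℝ) (θ : ℝ) (hθ : θ ≤ θstar)
    (hint₁ : Integrable (fun x => f (max x θ)) P)
    (hint₂ : Integrable (fun x => f (max x θstar)) P) :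
    (P (Set.Iic θ)).toReal * (f θ - f θstar) ≤
        ∫ x, (f (max x θ) - f (max x θstar)) ∂P ∧
      ∀ α : ℝ, 0 < α → α ≤ (P (Set.Iic θ)).toReal →
        f θ - f θstar ≤ 1 / α * ∫ x, (f (max x θ) - f (max x θstar)) ∂P := by
  have hgap : 0 ≤ f θ - f θstar := sub_nonneg.2 (hmin θ)
  have hbound : P.real (Set.Iic θ) * (f θ - f θstar) ≤
      ∫ x, (f (max x θ) - f (max x θstar)) ∂P :=
    measureReal_mul_le_integral_of_indicator_le measurableSet_Iic hgap (hint₁.sub hint₂)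
      (indicator_Iic_le_max_gap hmin hθ)
  refine ⟨hbound, fun α hα hαP => ?_⟩
  rw [one_div, inv_mul_eq_div, le_div_iff₀ hα, mul_comm]
  exact (mul_le_mul_of_nonneg_right hαP hgap).trans hbound

/-- **Lower bound on the suboptimality gap after a max-transform.** If `f` is convex with
global minimizer `θ*`, `ξ ∼ P`, and `θ ≤ θ*`, then
`E[f(ξ ∨ θ) - f(ξ ∨ θ*)] ≥ P(ξ ≤ θ) (f θ - f θ*)`; consequently, if `P(ξ ≤ θ) ≥ α > 0` then
`f θ - f θ* ≤ (1/α) E[f(ξ ∨ θ) - f(ξ ∨ θ*)]`. -/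
theorem expected_max_gap_lower_bound (f : ℝ → ℝ) (hf : ConvexOn ℝ Set.univ f)
    (θstar : ℝ) (hmin : ∀ y : ℝ, f θstar ≤ f y)
    (P : Measure ℝ) [IsProbabilityMeasure P] (θ : ℝ) (hθ : θ ≤ θstar)
    (hint₁ : Integrable (fun x => f (max x θ)) P)
    (hint₂ : Integrable (fun x => f (max x θstar)) P) :
    (P (Set.Iic θ)).toReal * (f θ - f θstar) ≤
        ∫ x, (f (max x θ) - f (max x θstar)) ∂P ∧
      ∀ α : ℝ, 0 < α → α ≤ (P (Set.Iic θ)).toReal →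
        f θ - f θstar ≤ 1 / α * ∫ x, (f (max x θ) - f (max x θstar)) ∂P :=
  expected_max_gap_lower_bound_general f θstar hmin P θ hθ hint₁ hint₂
end

section
/- Let f : ℝ → ℝ be convex with minimizer θ*, and let c(y, x) = k(y-x)⁺ + q(x-y)⁺ with k + q ≥ 0 be the two-sided transaction cost. Define f̲(y) = ky + f(y) and f̄(y) = -qy + f(y), both convex, with minimizers θ̲* ≤ θ̄*. Then for any θ̲ ≤ θ̄ and any random variable s with CDF ρ: E[c((s ∨ θ̲) ∧ θ̄, s) + f((s ∨ θ̲) ∧ θ̄)] - E[c((s ∨ θ̲*) ∧ θ̄*, s) + f((s ∨ θ̲*) ∧ θ̄*)] ≤ (f̲(θ̲) - f̲(θ̲*)) + (f̄(θ̄) - f̄(θ̄*)). -/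
/-!
When `a ≤ b`, clamping to `[a, b]` acts on `s` by first raising it to `a` and then lowering it
to `b`, and the cost splits accordingly:
`c(y, s) + f(y) = (f̲(s ∨ a) - k s) + (f̄(s ∧ b) + q s) - f(s)` for `y = (s ∨ a) ∧ b`.
In the difference of two such costs only `f̲(s ∨ θ̲) - f̲(s ∨ θ̲*)` and `f̄(s ∧ θ̄) - f̄(s ∧ θ̄*)`
survive. A convex function is antitone left of its minimizer `m` and monotone right of it, which
gives `g(s ∨ a) - g(s ∨ m) ≤ g(a) - g(m)` for every `s`, and symmetrically for `∧`. The pointwise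
bound integrates against any probability measure.
-/

open MeasureTheory Set

/-- The cost `c(y, s) + f(y)` of moving the cash level `s` to `y = (s ∨ a) ∧ b`. -/
def clampedCost (f : ℝ → ℝ) (k q a b s : ℝ) : ℝ :=
  (k * max (min (max s a) b - s) 0 + q * max (s - min (max s a) b) 0) + f (min (max s a) b)

lemma clampedCost_eq (f : ℝ → ℝ) (k q : ℝ) {a b : ℝ} (hab : a ≤ b) (s : ℝ) :
    clampedCost f k q a b s =
      ((k * max s a + f (max s a)) - k * s) + ((-q * min s b + f (min s b)) + q * s) - f s := by
  unfold clampedCost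
  rcases le_total s a with hsa | has
  · rw [max_eq_right hsa, min_eq_left hab, min_eq_left (hsa.trans hab),
      max_eq_left (sub_nonneg.2 hsa), max_eq_right (sub_nonpos.2 hsa)]
    ring
  · rw [max_eq_left has]
    rcases le_total s b with hsb | hbs
    · rw [min_eq_left hsb, sub_self, max_self]
      ring
    · rw [min_eq_right hbs, max_eq_right (sub_nonpos.2 hbs), max_eq_left (sub_nonneg.2 hbs)]
      ring

lemma ConvexOn.linear_add {f : ℝ → ℝ} (hf : ConvexOn ℝ univ f) (k : ℝ) :
    ConvexOn ℝ univ (fun y => k * y + f y) :=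
  (LinearMap.convexOn (LinearMap.mulLeft ℝ k) convex_univ).add hf

lemma ConvexOn.map_max_sub_map_max_le {g : ℝ → ℝ} (hg : ConvexOn ℝ univ g) {m : ℝ}
    (hm : ∀ y, g m ≤ g y) (a s : ℝ) : g (max s a) - g (max s m) ≤ g a - g m := by
  rcases le_total s a with hsa | has <;> rcases le_total s m with hsm | hms
  · rw [max_eq_right hsa, max_eq_right hsm]
  · rw [max_eq_right hsa, max_eq_left hms]
    linarith [hm s]
  · rw [max_eq_left has, max_eq_right hsm]
    have hs : g s ≤ max (g a) (g m) := hg.le_max_of_mem_Icc (mem_univ a) (mem_univ m) ⟨has, hsm⟩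
    rw [max_eq_left (hm a)] at hs
    linarith [hm s]
  · rw [max_eq_left has, max_eq_left hms]
    linarith [hm a]

lemma ConvexOn.map_min_sub_map_min_le {g : ℝ → ℝ} (hg : ConvexOn ℝ univ g) {m : ℝ}
    (hm : ∀ y, g m ≤ g y) (b s : ℝ) : g (min s b) - g (min s m) ≤ g b - g m := by
  have hneg : ConvexOn ℝ univ (fun y => g (-y)) := hg.comp_linearMap (-LinearMap.id)
  simpa only [max_neg_neg, neg_neg] using
    hneg.map_max_sub_map_max_le (m := -m) (fun y => by simpa only [neg_neg] using hm (-y)) (-b) (-s)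

lemma clampedCost_sub_clampedCost_le {f : ℝ → ℝ} (hf : ConvexOn ℝ univ f) {k q a b a' b' : ℝ}
    (hab : a ≤ b) (hab' : a' ≤ b') (ha' : ∀ y, k * a' + f a' ≤ k * y + f y)
    (hb' : ∀ y, -q * b' + f b' ≤ -q * y + f y) (s : ℝ) :
    clampedCost f k q a b s - clampedCost f k q a' b' s ≤
      ((k * a + f a) - (k * a' + f a')) + ((-q * b + f b) - (-q * b' + f b')) := by
  rw [clampedCost_eq f k q hab, clampedCost_eq f k q hab']
  linarith [(hf.linear_add k).map_max_sub_map_max_le ha' a s,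
    (hf.linear_add (-q)).map_min_sub_map_min_le hb' b s]

lemma integral_sub_integral_le_of_forall_sub_le {Ω : Type*} [MeasurableSpace Ω] {μ : Measure Ω}
    [IsProbabilityMeasure μ] {F G : Ω → ℝ} {C : ℝ} (hF : Integrable F μ) (hG : Integrable G μ)
    (hFG : ∀ ω, F ω - G ω ≤ C) : ∫ ω, F ω ∂μ - ∫ ω, G ω ∂μ ≤ C := by
  rw [← integral_sub hF hG]
  simpa using integral_mono (hF.sub hG) (integrable_const C) hFG

theorem cash_balance_gap_bound_general (f : ℝ → ℝ) (hf : ConvexOn ℝ Set.univ f)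
    (k q : ℝ)
    (θl θu θls θus : ℝ) (hθ : θl ≤ θu) (hθs : θls ≤ θus)
    (hminl : ∀ y : ℝ, k * θls + f θls ≤ k * y + f y)
    (hminu : ∀ y : ℝ, -q * θus + f θus ≤ -q * y + f y)
    (ρ : Measure ℝ) [IsProbabilityMeasure ρ]
    (hint₁ : Integrable (fun s =>
      (k * max (min (max s θl) θu - s) 0 + q * max (s - min (max s θl) θu) 0) +
        f (min (max s θl) θu)) ρ)
    (hint₂ : Integrable (fun s =>
      (k * max (min (max s θls) θus - s) 0 + q * max (s - min (max s θls) θus) 0) +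
        f (min (max s θls) θus)) ρ) :
    (∫ s, ((k * max (min (max s θl) θu - s) 0 + q * max (s - min (max s θl) θu) 0) +
        f (min (max s θl) θu)) ∂ρ) -
      (∫ s, ((k * max (min (max s θls) θus - s) 0 + q * max (s - min (max s θls) θus) 0) +
        f (min (max s θls) θus)) ∂ρ) ≤
      ((k * θl + f θl) - (k * θls + f θls)) + ((-q * θu + f θu) - (-q * θus + f θus)) :=
  integral_sub_integral_le_of_forall_sub_le hint₁ hint₂
    (clampedCost_sub_clampedCost_le hf hθ hθs hminl hminu)

/-- **Single-period suboptimality bound for the stochastic cash balance problem.**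
With transaction cost `c(y, x) = k(y-x)⁺ + q(x-y)⁺` (`k + q ≥ 0`), convex `f`, and
`f̲(y) = ky + f(y)`, `f̄(y) = -qy + f(y)` minimized at `θ̲* ≤ θ̄*`, for any `θ̲ ≤ θ̄` and
random state `s ∼ ρ`:
`E[c((s∨θ̲)∧θ̄, s) + f((s∨θ̲)∧θ̄)] - E[c((s∨θ̲*)∧θ̄*, s) + f((s∨θ̲*)∧θ̄*)]
  ≤ (f̲(θ̲) - f̲(θ̲*)) + (f̄(θ̄) - f̄(θ̄*))`. -/
theorem cash_balance_gap_bound (f : ℝ → ℝ) (hf : ConvexOn ℝ Set.univ f)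
    (k q : ℝ) (hkq : 0 ≤ k + q)
    (θl θu θls θus : ℝ) (hθ : θl ≤ θu) (hθs : θls ≤ θus)
    (hminl : ∀ y : ℝ, k * θls + f θls ≤ k * y + f y)
    (hminu : ∀ y : ℝ, -q * θus + f θus ≤ -q * y + f y)
    (ρ : Measure ℝ) [IsProbabilityMeasure ρ]
    (hint₁ : Integrable (fun s =>
      (k * max (min (max s θl) θu - s) 0 + q * max (s - min (max s θl) θu) 0) +
        f (min (max s θl) θu)) ρ)
    (hint₂ : Integrable (fun s =>
      (k * max (min (max s θls) θus - s) 0 + q * max (s - min (max s θls) θus) 0) +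
        f (min (max s θls) θus)) ρ) :
    (∫ s, ((k * max (min (max s θl) θu - s) 0 + q * max (s - min (max s θl) θu) 0) +
        f (min (max s θl) θu)) ∂ρ) -
      (∫ s, ((k * max (min (max s θls) θus - s) 0 + q * max (s - min (max s θls) θus) 0) +
        f (min (max s θls) θus)) ∂ρ) ≤
      ((k * θl + f θl) - (k * θls + f θls)) + ((-q * θu + f θu) - (-q * θus + f θus)) :=
  cash_balance_gap_bound_general f hf k q θl θu θls θus hθ hθs hminl hminu ρ hint₁ hint₂
end
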